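/- The Jacobian of h(u) = u / sqrt(1 + u^T u) is φ(u) = (1 + u^T u)^{-3/2} (I - S(u)^2), and it satisfies 0 < ‖φ(u)‖ ≤ 1 for all u in R^3. -/

import Mathlib

/-!
In any real inner product space, with `a = 1 + ‖u‖²`, the chain rule applied to
`a^(-1/2) • u` gives the derivative `v ↦ a^(-3/2) (a v - ⟪u, v⟫ u)`. In `ℝ³` this is `φ(u)`,
because `S(u)² v = u × (u × v) = ⟪u, v⟫ u - ‖u‖² v`. By Cauchy–Schwarz,
`‖a v - ⟪u, v⟫ u‖² = a² ‖v‖² - (2 + ‖u‖²) ⟪u, v⟫² ≤ a² ‖v‖²`, so `‖φ(u)‖ ≤ a^(-1/2) ≤ 1`,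
and `⟪a v - ⟪u, v⟫ u, v⟫ ≥ ‖v‖²` shows that `φ(u)` is injective, hence nonzero.
-/

open Matrix

noncomputable section

abbrev E3 := EuclideanSpace ℝ (Fin 3)

/-- The skew-symmetric (cross-product) matrix `S(x)`, satisfying `S(x) y = x × y`. -/
def sk (x : Fin 3 → ℝ) : Matrix (Fin 3) (Fin 3) ℝ :=
  !![0, -x 2, x 1; x 2, 0, -x 0; -x 1, x 0, 0]

/-- The bounded function `h(u) = (1 + uᵀu)^{-1/2} u`. -/
def hfun (u : E3) : E3 := (Real.sqrt (1 + ‖u‖ ^ 2))⁻¹ • u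

/-- The matrix `φ(u) = (1 + uᵀu)^{-3/2} (I - S(u)²)`. -/
def phiM (u : E3) : Matrix (Fin 3) (Fin 3) ℝ :=
  ((1 + ‖u‖ ^ 2) ^ (3 / 2 : ℝ))⁻¹ • ((1 : Matrix (Fin 3) (Fin 3) ℝ) - sk (fun i => u i) ^ 2)

open scoped RealInnerProductSpace

section
variable {E : Type*} [NormedAddCommGroup E] [InnerProductSpace ℝ E]

def univUnitBallDeriv (u : E) : E →L[ℝ] E :=
  ((1 + ‖u‖ ^ 2) ^ (3 / 2 : ℝ))⁻¹ •
    ((1 + ‖u‖ ^ 2) • ContinuousLinearMap.id ℝ E - (innerSL ℝ u).smulRight u)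

theorem univUnitBallDeriv_apply (u v : E) :
    univUnitBallDeriv u v =
      ((1 + ‖u‖ ^ 2) ^ (3 / 2 : ℝ))⁻¹ • ((1 + ‖u‖ ^ 2) • v - ⟪u, v⟫ • u) := rfl

theorem hasFDerivAt_univUnitBall (u : E) :
    HasFDerivAt OpenPartialHomeomorph.univUnitBall (univUnitBallDeriv u) u := by
  have ha : 0 < 1 + ‖u‖ ^ 2 := by positivity
  have hsq : HasFDerivAt (fun x : E => 1 + ‖x‖ ^ 2) (2 • innerSL ℝ u) u :=
    (hasStrictFDerivAt_norm_sq u).hasFDerivAt.const_add 1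
  have hball : ⇑(OpenPartialHomeomorph.univUnitBall (E := E)) =
      fun x => (1 + ‖x‖ ^ 2) ^ (-(1 / 2) : ℝ) • x := by
    ext x : 1
    rw [OpenPartialHomeomorph.univUnitBall_apply, Real.sqrt_eq_rpow, Real.rpow_neg (by positivity)]
  rw [hball]
  refine ((hsq.rpow_const (Or.inl ha.ne')).smul (hasFDerivAt_id u)).congr_fderiv ?_
  ext v
  have hpow : (1 + ‖u‖ ^ 2) ^ (-(1 / 2) : ℝ) =
      ((1 + ‖u‖ ^ 2) ^ (3 / 2 : ℝ))⁻¹ * (1 + ‖u‖ ^ 2) := by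
    rw [← Real.rpow_neg ha.le, ← Real.rpow_add_one ha.ne']; norm_num
  have hpow' : (1 + ‖u‖ ^ 2) ^ (-(1 / 2) - 1 : ℝ) = ((1 + ‖u‖ ^ 2) ^ (3 / 2 : ℝ))⁻¹ := by
    rw [← Real.rpow_neg ha.le]; norm_num
  simp only [_root_.add_apply, _root_.smul_apply, ContinuousLinearMap.smulRight_apply,
    ContinuousLinearMap.id_apply, innerSL_apply_apply, univUnitBallDeriv_apply, hpow, hpow', id_eq,
    smul_eq_mul]
  module

theorem real_inner_sq_le_sq_norm_mul_sq_norm (u v : E) : ⟪u, v⟫ ^ 2 ≤ ‖u‖ ^ 2 * ‖v‖ ^ 2 := by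
  simpa only [sq, real_inner_self_eq_norm_sq] using real_inner_mul_inner_self_le u v

theorem norm_smul_sub_inner_smul_le {c : ℝ} (u v : E) (hc : ‖u‖ ^ 2 ≤ 2 * c) :
    ‖c • v - ⟪u, v⟫ • u‖ ≤ c * ‖v‖ := by
  have hc0 : 0 ≤ c := by nlinarith [sq_nonneg ‖u‖]
  refine le_of_sq_le_sq ?_ (by positivity)
  calc ‖c • v - ⟪u, v⟫ • u‖ ^ 2 = c ^ 2 * ‖v‖ ^ 2 - ⟪u, v⟫ ^ 2 * (2 * c - ‖u‖ ^ 2) := by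
        rw [norm_sub_sq_real, norm_smul, norm_smul, real_inner_smul_left, real_inner_smul_right,
          real_inner_comm v u, Real.norm_eq_abs, Real.norm_eq_abs, mul_pow, mul_pow, sq_abs, sq_abs]
        ring
    _ ≤ (c * ‖v‖) ^ 2 := by
        nlinarith [sq_nonneg ⟪u, v⟫, real_inner_sq_le_sq_norm_mul_sq_norm u v]

theorem mul_sq_norm_le_inner_smul_sub_inner_smul {c : ℝ} (u v : E) :
    (c - ‖u‖ ^ 2) * ‖v‖ ^ 2 ≤ ⟪c • v - ⟪u, v⟫ • u, v⟫ := by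
  rw [inner_sub_left, real_inner_smul_left, real_inner_smul_left, real_inner_self_eq_norm_sq]
  nlinarith [real_inner_sq_le_sq_norm_mul_sq_norm u v]

theorem univUnitBallDeriv_ne_zero [Nontrivial E] (u : E) : univUnitBallDeriv u ≠ 0 := by
  obtain ⟨v, hv⟩ := exists_ne (0 : E)
  intro h
  have hpos : 0 < ⟪univUnitBallDeriv u v, v⟫ := by
    rw [univUnitBallDeriv_apply, real_inner_smul_left]
    refine mul_pos (by positivity)
      (lt_of_lt_of_le ?_ (mul_sq_norm_le_inner_smul_sub_inner_smul u v))
    rw [add_sub_cancel_right, one_mul]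
    exact pow_pos (norm_pos_iff.2 hv) 2
  simp [h] at hpos

theorem norm_univUnitBallDeriv_le_one (u : E) : ‖univUnitBallDeriv u‖ ≤ 1 := by
  have ha : 1 ≤ 1 + ‖u‖ ^ 2 := le_add_of_nonneg_right (sq_nonneg _)
  have hpow : 1 + ‖u‖ ^ 2 ≤ (1 + ‖u‖ ^ 2) ^ (3 / 2 : ℝ) := by
    simpa using Real.rpow_le_rpow_of_exponent_le ha (by norm_num : (1 : ℝ) ≤ 3 / 2)
  refine ContinuousLinearMap.opNorm_le_bound _ zero_le_one fun v => ?_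
  rw [univUnitBallDeriv_apply, norm_smul, norm_inv, Real.norm_of_nonneg (by positivity), one_mul,
    inv_mul_le_iff₀ (by positivity)]
  calc ‖(1 + ‖u‖ ^ 2) • v - ⟪u, v⟫ • u‖ ≤ (1 + ‖u‖ ^ 2) * ‖v‖ :=
        norm_smul_sub_inner_smul_le u v (by nlinarith [sq_nonneg ‖u‖])
    _ ≤ (1 + ‖u‖ ^ 2) ^ (3 / 2 : ℝ) * ‖v‖ := by gcongr

end

theorem sk_mulVec (x y : Fin 3 → ℝ) : sk x *ᵥ y = x ⨯₃ y := by
  ext i; fin_cases i <;> simp [sk, cross_apply, mulVec, dotProduct, Fin.sum_univ_three] <;> ring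

theorem sk_sq_mulVec (x y : Fin 3 → ℝ) : sk x ^ 2 *ᵥ y = (x ⬝ᵥ y) • x - (x ⬝ᵥ x) • y := by
  rw [sq, ← mulVec_mulVec, sk_mulVec, sk_mulVec, cross_cross_eq_smul_sub_smul']

theorem toEuclideanCLM_phiM (u : E3) :
    (toEuclideanCLM (𝕜 := ℝ) (phiM u) : E3 →L[ℝ] E3) = univUnitBallDeriv u := by
  have hnorm : ‖u‖ ^ 2 = u.ofLp ⬝ᵥ u.ofLp := by rw [← real_inner_self_eq_norm_sq]; rfl
  ext v : 1
  apply WithLp.ofLp_injective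
  rw [ofLp_toEuclideanCLM, univUnitBallDeriv_apply, phiM, smul_mulVec, sub_mulVec, one_mulVec,
    sk_sq_mulVec, EuclideanSpace.inner_eq_star_dotProduct, hnorm]
  simp only [WithLp.ofLp_smul, WithLp.ofLp_sub, star_trivial, dotProduct_comm v.ofLp]
  module

/-- `φ(u)` is the Jacobian of `h` at `u`, and its operator norm lies in `(0, 1]`. -/
theorem hfun_jacobian (u : E3) :
    HasFDerivAt hfun ((Matrix.toEuclideanCLM (𝕜 := ℝ) (phiM u) : E3 →L[ℝ] E3)) u ∧
    0 < ‖(Matrix.toEuclideanCLM (𝕜 := ℝ) (phiM u) : E3 →L[ℝ] E3)‖ ∧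
    ‖(Matrix.toEuclideanCLM (𝕜 := ℝ) (phiM u) : E3 →L[ℝ] E3)‖ ≤ 1 := by
  rw [toEuclideanCLM_phiM]
  exact ⟨hasFDerivAt_univUnitBall u,
    norm_pos_iff.2 (univUnitBallDeriv_ne_zero u), norm_univUnitBallDeriv_le_one u⟩

end
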